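/- arXiv:2409.03871 — 2 statements merged into one kernel-verified Lean document; each statement's English description precedes it below -/
import Mathlib

section
/- Bound on Q_{V1}: Under the setup assumptions, define Q_{V1}(t_s, t_e) := ∑_{i=1}^l ω₁^{p_i} ∫_{t_s}^{t_e} ∫_{t_s}^{θ} ∂_t f_i(τ, x(τ)) u_i(ω₁θ) dτ dθ. Then ‖Q_{V1}(t_s, t_e)‖ ≤ π l L Λ₁ ‖x₀‖ ω₁^{p′−1} T₁. -/
open MeasureTheory Real Filter

noncomputable section

/-- The state space `ℝ^n`. -/
abbrev E (n : ℕ) := EuclideanSpace ℝ (Fin n)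

/-- Lie derivative `L_{f_a} f_b (t,x) = D_x f_b(t,x) [f_a(t,x)]`. -/
def lieDeriv {n : ℕ} (f : ℕ → ℝ → E n → E n)
    (Df : ℕ → ℝ → E n → (E n →L[ℝ] E n)) (a b : ℕ) (t : ℝ) (x : E n) : E n :=
  Df b t x (f a t x)

/-- Second Lie derivative `L_{f_m} L_{f_j} f_i (t,x) = D_x (L_{f_j} f_i)(t,x) [f_m(t,x)]`. -/
def lieDeriv2 {n : ℕ} (f : ℕ → ℝ → E n → E n)
    (Df : ℕ → ℝ → E n → (E n →L[ℝ] E n))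
    (DLf : ℕ → ℕ → ℝ → E n → (E n →L[ℝ] E n)) (m j i : ℕ) (t : ℝ) (x : E n) : E n :=
  DLf j i t x (f m t x)

/-- Lie bracket `[f_i, f_j] = L_{f_i} f_j − L_{f_j} f_i`. -/
def lieBracket {n : ℕ} (f : ℕ → ℝ → E n → E n)
    (Df : ℕ → ℝ → E n → (E n →L[ℝ] E n)) (i j : ℕ) (t : ℝ) (x : E n) : E n :=
  lieDeriv f Df i j t x - lieDeriv f Df j i t x

/-- `γ_{ij}(ω) = (ω^{p_i+p_j}/T) ∫₀^T ∫₀^θ u_j(ωθ) u_i(ωτ) dτ dθ`, `T = 2π/ω`. -/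
def gammaCoeff (p : ℕ → ℝ) (u : ℕ → ℝ → ℝ) (i j : ℕ) (ω : ℝ) : ℝ :=
  ω ^ (p i + p j) / (2 * π / ω) *
    ∫ θ in (0:ℝ)..(2 * π / ω), ∫ τ in (0:ℝ)..θ, u j (ω * θ) * u i (ω * τ)

/-- Regularity of a time-dependent vector field: continuous in the first argument,
globally uniformly `L`-Lipschitz in the second argument, and vanishing at `x = 0`. -/
def RegVF {n : ℕ} (L : ℝ) (g : ℝ → E n → E n) : Prop :=
  (∀ x, Continuous fun t => g t x) ∧
  (∀ t x y, ‖g t x - g t y‖ ≤ L * ‖x - y‖) ∧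
  (∀ t, g t 0 = 0)

/-- Standing assumptions: dither assumptions and vector-field assumptions. -/
structure Hyps {n : ℕ} (l : ℕ)
    (f : ℕ → ℝ → E n → E n)
    (Df : ℕ → ℝ → E n → (E n →L[ℝ] E n))
    (ft : ℕ → ℝ → E n → E n)
    (Lft : ℕ → ℕ → ℝ → E n → E n)
    (DLf : ℕ → ℕ → ℝ → E n → (E n →L[ℝ] E n))
    (u : ℕ → ℝ → ℝ) (p : ℕ → ℝ) (L : ℝ) : Prop where
  hp0 : p 0 = 0
  hu0 : ∀ t, u 0 t = 1
  hp : ∀ i, 1 ≤ i → i ≤ l → p i ∈ Set.Ioo (0:ℝ) 1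
  humeas : ∀ i, i ≤ l → Measurable (u i)
  hubdd : ∀ i, i ≤ l → ∀ t, |u i t| ≤ 1
  huper : ∀ i, i ≤ l → ∀ t, u i (t + 2 * π) = u i t
  huzm : ∀ i, 1 ≤ i → i ≤ l → (∫ t in (0:ℝ)..(2 * π), u i t) = 0
  hLpos : 0 < L
  hDf : ∀ i, i ≤ l → ∀ t x, HasFDerivAt (f i t) (Df i t x) x
  hft : ∀ i, i ≤ l → ∀ x t, HasDerivAt (fun s => f i s x) (ft i t x) t
  hLft : ∀ i j, i ≤ l → j ≤ l → ∀ x t,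
    HasDerivAt (fun s => lieDeriv f Df j i s x) (Lft j i t x) t
  hDLf : ∀ i j, i ≤ l → j ≤ l → ∀ t x,
    HasFDerivAt (fun y => lieDeriv f Df j i t y) (DLf j i t x) x
  hreg_f : ∀ i, i ≤ l → RegVF L (f i)
  hreg_ft : ∀ i, i ≤ l → RegVF L (ft i)
  hreg_Lf : ∀ i j, i ≤ l → j ≤ l → RegVF L (lieDeriv f Df j i)
  hreg_Lft : ∀ i j, i ≤ l → j ≤ l → RegVF L (Lft j i)
  hreg_LLf : ∀ i j m, i ≤ l → j ≤ l → m ≤ l → RegVF L (lieDeriv2 f Df DLf m j i)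

/-- The interaction condition on the powers `p_i` and the Lie brackets. -/
def InteractionCondition {n : ℕ} (l : ℕ) (f : ℕ → ℝ → E n → E n)
    (Df : ℕ → ℝ → E n → (E n →L[ℝ] E n)) (u : ℕ → ℝ → ℝ) (p : ℕ → ℝ) : Prop :=
  ∀ i j, 1 ≤ i → i ≤ l → 1 ≤ j → j ≤ l → 1 < p i + p j →
    (∀ ω : ℝ, 0 < ω → gammaCoeff p u i j ω = 0) ∨
    (∀ (t : ℝ) (x : E n), lieBracket f Df i j t x = 0)

/-- `x` is a (Carathéodory, i.e. integral-form) solution of the input-affine system (S)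
with dither frequency `ω` on the set `s`, with initial time `t₀`. -/
def IsSSol {n : ℕ} (l : ℕ) (f : ℕ → ℝ → E n → E n) (u : ℕ → ℝ → ℝ) (p : ℕ → ℝ)
    (ω : ℝ) (x : ℝ → E n) (s : Set ℝ) (t₀ : ℝ) : Prop :=
  ContinuousOn x s ∧
  ∀ t ∈ s, x t = x t₀ + ∫ τ in t₀..t,
    (f 0 τ (x τ) + ∑ i ∈ Finset.Icc 1 l, (ω ^ p i * u i (ω * τ)) • f i τ (x τ))

/-- `x` is a solution of the associated Lie-bracket system (LBS), with coefficients
`ν i j = lim_{ω → ∞} γ_{ij}(ω)`, on the set `s`, with initial time `t₀`. -/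
def IsLBSSol {n : ℕ} (l : ℕ) (f : ℕ → ℝ → E n → E n)
    (Df : ℕ → ℝ → E n → (E n →L[ℝ] E n)) (ν : ℕ → ℕ → ℝ)
    (x : ℝ → E n) (s : Set ℝ) (t₀ : ℝ) : Prop :=
  ContinuousOn x s ∧
  ∀ t ∈ s, x t = x t₀ + ∫ τ in t₀..t,
    (f 0 τ (x τ) + ∑ i ∈ Finset.Icc 1 l, ∑ j ∈ Finset.Ioc i l,
      ν i j • lieBracket f Df i j τ (x τ))

end
noncomputable section

/-- `V_i(t_s, t_e) = ∫_{t_s}^{t_e} ω₁^{p_i} u_i(ω₁ θ) dθ`. -/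
def Vi (u : ℕ → ℝ → ℝ) (p : ℕ → ℝ) (ω₁ : ℝ) (i : ℕ) (ts te : ℝ) : ℝ :=
  ∫ θ in ts..te, ω₁ ^ p i * u i (ω₁ * θ)

/-- `V_{ij}(t_s, t_e) = ∫_{t_s}^{t_e} ω₁^{p_i} u_i(ω₁ θ) V_j(t_s, θ) dθ`. -/
def Vij (u : ℕ → ℝ → ℝ) (p : ℕ → ℝ) (ω₁ : ℝ) (i j : ℕ) (ts te : ℝ) : ℝ :=
  ∫ θ in ts..te, (ω₁ ^ p i * u i (ω₁ * θ)) * Vi u p ω₁ j ts θ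

/-- The remainder `R(t_s, t_e)`. -/
def Rrem {n : ℕ} (l : ℕ) (f : ℕ → ℝ → E n → E n)
    (Df : ℕ → ℝ → E n → (E n →L[ℝ] E n))
    (DLf : ℕ → ℕ → ℝ → E n → (E n →L[ℝ] E n))
    (u : ℕ → ℝ → ℝ) (p : ℕ → ℝ) (ω₁ : ℝ) (x : ℝ → E n) (ts te : ℝ) : E n :=
  ∑ i ∈ Finset.Icc 1 l, ∑ j ∈ Finset.Icc 0 l, ∑ m ∈ Finset.Icc 0 l,
    ω₁ ^ (p i + p j + p m) •
      ∫ θ in ts..te, u i (ω₁ * θ) •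
        ∫ τ in ts..θ, u j (ω₁ * τ) •
          ∫ σ in ts..τ, u m (ω₁ * σ) • lieDeriv2 f Df DLf m j i σ (x σ)

/-- The term `Q_{V1}(t_s, t_e)`. -/
def QV1 {n : ℕ} (l : ℕ) (ft : ℕ → ℝ → E n → E n)
    (u : ℕ → ℝ → ℝ) (p : ℕ → ℝ) (ω₁ : ℝ) (x : ℝ → E n) (ts te : ℝ) : E n :=
  ∑ i ∈ Finset.Icc 1 l, ω₁ ^ p i •
    ∫ θ in ts..te, u i (ω₁ * θ) • ∫ τ in ts..θ, ft i τ (x τ)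

/-- The term `Q_{V2}(t_s, t_e)`. -/
def QV2 {n : ℕ} (l : ℕ) (Lft : ℕ → ℕ → ℝ → E n → E n)
    (u : ℕ → ℝ → ℝ) (p : ℕ → ℝ) (ω₁ : ℝ) (x : ℝ → E n) (ts te : ℝ) : E n :=
  ∑ i ∈ Finset.Ico 1 l, ∑ j ∈ Finset.Icc 0 l,
    ω₁ ^ (p i + p j) •
      ∫ θ in ts..te, u i (ω₁ * θ) •
        ∫ τ in ts..θ, u j (ω₁ * τ) • ∫ σ in ts..τ, Lft j i σ (x σ)

/-- The term `Q_1(t_s, t_e)`. -/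
def Q1 {n : ℕ} (l : ℕ) (f : ℕ → ℝ → E n → E n)
    (Df : ℕ → ℝ → E n → (E n →L[ℝ] E n))
    (u : ℕ → ℝ → ℝ) (p : ℕ → ℝ) (ω₁ : ℝ) (x : ℝ → E n) (ts te : ℝ) : E n :=
  ∑ i ∈ Finset.Icc 1 l, Vij u p ω₁ i 0 ts te • lieDeriv f Df 0 i ts (x ts)

/-- The term `Q_{1T}(t_s, t_e)`. -/
def Q1T {n : ℕ} (l : ℕ) (f : ℕ → ℝ → E n → E n)
    (Df : ℕ → ℝ → E n → (E n →L[ℝ] E n))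
    (u : ℕ → ℝ → ℝ) (p : ℕ → ℝ) (ω₁ : ℝ) (x : ℝ → E n) (ts te : ℝ) : E n :=
  (∑ i ∈ Finset.Icc 1 l, ∑ j ∈ Finset.Ioc i l,
    (Vi u p ω₁ i ts te * Vi u p ω₁ j ts te) • lieDeriv f Df j i ts (x ts))
  + (1/2 : ℝ) • ∑ i ∈ Finset.Icc 1 l,
      ((Vi u p ω₁ i ts te) ^ 2) • lieDeriv f Df i i ts (x ts)

/-- The term `H(t_s, t_e)`. -/
def Hterm {n : ℕ} (l : ℕ) (f : ℕ → ℝ → E n → E n)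
    (Df : ℕ → ℝ → E n → (E n →L[ℝ] E n))
    (u : ℕ → ℝ → ℝ) (p : ℕ → ℝ) (ω₁ : ℝ) (x : ℝ → E n) (ts te : ℝ) : E n :=
  (∑ i ∈ Finset.Icc 1 l, Vi u p ω₁ i ts te • f i ts (x ts))
  + ∑ i ∈ Finset.Icc 1 l, ∑ j ∈ Finset.Ioc i l,
      Vij u p ω₁ j i ts te • lieBracket f Df i j ts (x ts)

/-- The term `I(t_s, t_e)`. -/
def Iterm {n : ℕ} (l : ℕ) (f : ℕ → ℝ → E n → E n)
    (Df : ℕ → ℝ → E n → (E n →L[ℝ] E n))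
    (u : ℕ → ℝ → ℝ) (p : ℕ → ℝ) (ω₁ : ℝ) (x : ℝ → E n) (ts te : ℝ) : E n :=
  ∫ θ in ts..te, ∑ i ∈ Finset.Icc 1 l, ∑ j ∈ Finset.Ioc i l,
    gammaCoeff p u i j ω₁ • lieBracket f Df i j θ (x θ)

/-- The term `R_{L1}(t_s, t_e)`. -/
def RL1 {n : ℕ} (l : ℕ) (f : ℕ → ℝ → E n → E n)
    (Df : ℕ → ℝ → E n → (E n →L[ℝ] E n))
    (u : ℕ → ℝ → ℝ) (p : ℕ → ℝ) (ω₁ : ℝ) (x : ℝ → E n) (ts te : ℝ) : E n :=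
  ∑ i ∈ Finset.Icc 1 l, ∑ j ∈ Finset.Ioc i l,
    gammaCoeff p u i j ω₁ •
      ∫ θ in ts..te, (lieBracket f Df i j ts (x ts) - lieBracket f Df i j θ (x θ))

/-- The remainder `R_{T1}(t₀, t₁)`. -/
def RT1 {n : ℕ} (l : ℕ) (f : ℕ → ℝ → E n → E n)
    (Df : ℕ → ℝ → E n → (E n →L[ℝ] E n))
    (ft : ℕ → ℝ → E n → E n) (Lft : ℕ → ℕ → ℝ → E n → E n)
    (u : ℕ → ℝ → ℝ) (p : ℕ → ℝ) (ω₁ : ℝ) (x : ℝ → E n) (t₀ t₁ : ℝ) : E n :=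
  let T₁ : ℝ := 2 * π / ω₁
  let r : ℕ := ⌊(t₁ - t₀) / T₁⌋₊
  let tq : ℕ → ℝ := fun q => t₀ + (q : ℝ) * T₁
  (∑ q ∈ Finset.range r,
      (QV1 l ft u p ω₁ x (tq q) (tq (q+1)) + QV2 l Lft u p ω₁ x (tq q) (tq (q+1))
        + Q1 l f Df u p ω₁ x (tq q) (tq (q+1)) + RL1 l f Df u p ω₁ x (tq q) (tq (q+1))))
    - Iterm l f Df u p ω₁ x (tq r) t₁
    + QV1 l ft u p ω₁ x (tq r) t₁ + QV2 l Lft u p ω₁ x (tq r) t₁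
    + Q1 l f Df u p ω₁ x (tq r) t₁ + Q1T l f Df u p ω₁ x (tq r) t₁
    + Hterm l f Df u p ω₁ x (tq r) t₁

end

/-!
Since `∂_t f_i` is `L`-Lipschitz in `x` and vanishes at `x = 0`, along the solution it is bounded
by `L Λ₁ ‖x₀‖`; with `|u_i| ≤ 1` the double integral over `t_s ≤ τ ≤ θ ≤ t_e` is then at most
`L Λ₁ ‖x₀‖ (t_e - t_s)² / 2 ≤ L Λ₁ ‖x₀‖ T₁² / 2`, and `ω₁^{p_i} T₁² / 2 ≤ π ω₁^{p′-1} T₁`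
because `ω₁ ≥ 1` and `ω₁ T₁ = 2π`.
-/

theorem RegVF.norm_apply_le {n : ℕ} {L : ℝ} {g : ℝ → E n → E n} (hg : RegVF L g)
    (t : ℝ) (y : E n) : ‖g t y‖ ≤ L * ‖y‖ := by
  simpa [hg.2.2 t] using hg.2.1 t y 0

theorem norm_integral_smul_integral_le {F : Type*} [NormedAddCommGroup F] [NormedSpace ℝ F]
    {φ : ℝ → ℝ} {g : ℝ → F} {a b M C : ℝ} (hab : a ≤ b)
    (hφ : ∀ θ ∈ Set.Icc a b, |φ θ| ≤ M) (hg : ∀ τ ∈ Set.Icc a b, ‖g τ‖ ≤ C) :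
    ‖∫ θ in a..b, φ θ • ∫ τ in a..θ, g τ‖ ≤ M * C * ((b - a) ^ 2 / 2) := by
  have hpointwise : ∀ θ ∈ Set.Ioc a b,
      ‖φ θ • ∫ τ in a..θ, g τ‖ ≤ M * C * (θ - a) := by
    intro θ ⟨haθ, hθb⟩
    have hinner : ‖∫ τ in a..θ, g τ‖ ≤ C * |θ - a| :=
      intervalIntegral.norm_integral_le_of_norm_le_const fun τ hτ => by
        rw [Set.uIoc_of_le haθ.le] at hτ
        exact hg τ ⟨hτ.1.le, hτ.2.trans hθb⟩
    have hφθ := hφ θ ⟨haθ.le, hθb⟩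
    calc ‖φ θ • ∫ τ in a..θ, g τ‖ = |φ θ| * ‖∫ τ in a..θ, g τ‖ := by
          rw [norm_smul, Real.norm_eq_abs]
      _ ≤ M * (C * |θ - a|) := mul_le_mul hφθ hinner (norm_nonneg _) ((abs_nonneg _).trans hφθ)
      _ = M * C * (θ - a) := by rw [abs_of_pos (sub_pos.mpr haθ), mul_assoc]
  calc ‖∫ θ in a..b, φ θ • ∫ τ in a..θ, g τ‖
      ≤ ∫ θ in a..b, M * C * (θ - a) :=
        intervalIntegral.norm_integral_le_of_norm_le hab
          (Filter.Eventually.of_forall hpointwise)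
          (by apply Continuous.intervalIntegrable; fun_prop)
    _ = M * C * ((b - a) ^ 2 / 2) := by
        simp only [intervalIntegral.integral_const_mul, intervalIntegral.integral_comp_sub_right
          (fun y => y), sub_self, integral_id]
        ring

theorem bound_QV1_general
    {n : ℕ} (l : ℕ)
    (f : ℕ → ℝ → E n → E n)
    (Df : ℕ → ℝ → E n → (E n →L[ℝ] E n))
    (ft : ℕ → ℝ → E n → E n)
    (Lft : ℕ → ℕ → ℝ → E n → E n)
    (DLf : ℕ → ℕ → ℝ → E n → (E n →L[ℝ] E n))
    (u : ℕ → ℝ → ℝ) (p : ℕ → ℝ) (L : ℝ)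
    (hyp : Hyps l f Df ft Lft DLf u p L)
    -- setup: a bounded solution of (S) with frequency `ω₁ ≥ 1` on `[t₀, t₁]`
    (t₀ t₁ ω₁ Λ₁ : ℝ) (x₀ : E n) (x : ℝ → E n)
    (hω₁ : 1 ≤ ω₁)
    (hxb : ∀ t ∈ Set.Icc t₀ t₁, ‖x t‖ ≤ Λ₁ * ‖x₀‖)
    -- `p′ = max_{1 ≤ i ≤ l} p i`
    (p' : ℝ)
    (hp'ub : ∀ i, 1 ≤ i → i ≤ l → p i ≤ p')
    -- `t_s ∈ [t₀, t_r]` and `t_e ∈ [t_s, min (t_s + T₁) t₁]`, where `T₁ = 2π/ω₁`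
    (ts te : ℝ)
    (hts : ts ∈ Set.Icc t₀ (t₀ + (⌊(t₁ - t₀) / (2 * π / ω₁)⌋₊ : ℝ) * (2 * π / ω₁)))
    (hte : te ∈ Set.Icc ts (min (ts + 2 * π / ω₁) t₁)) :
    ‖QV1 l ft u p ω₁ x ts te‖
      ≤ π * l * L * Λ₁ * ‖x₀‖ * ω₁ ^ (p' - 1) * (2 * π / ω₁) := by
  obtain ⟨hts₀, -⟩ := hts
  obtain ⟨hts_te, hte_le⟩ := hte
  have hte_t₁ : te ≤ t₁ := hte_le.trans (min_le_right _ _)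
  have hlen : te - ts ≤ 2 * π / ω₁ := by linarith [hte_le.trans (min_le_left _ _)]
  have hω₀ : 0 < ω₁ := one_pos.trans_le hω₁
  have hC : 0 ≤ L * (Λ₁ * ‖x₀‖) :=
    mul_nonneg hyp.hLpos.le ((norm_nonneg _).trans (hxb ts ⟨hts₀, hts_te.trans hte_t₁⟩))
  have hft_bound : ∀ i ≤ l, ∀ τ ∈ Set.Icc ts te, ‖ft i τ (x τ)‖ ≤ L * (Λ₁ * ‖x₀‖) :=
    fun i hil τ hτ => ((hyp.hreg_ft i hil).norm_apply_le τ (x τ)).trans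
      (mul_le_mul_of_nonneg_left (hxb τ ⟨hts₀.trans hτ.1, hτ.2.trans hte_t₁⟩) hyp.hLpos.le)
  have hterm : ∀ i ∈ Finset.Icc 1 l,
      ‖ω₁ ^ p i • ∫ θ in ts..te, u i (ω₁ * θ) • ∫ τ in ts..θ, ft i τ (x τ)‖
        ≤ ω₁ ^ p' * (L * (Λ₁ * ‖x₀‖) * ((2 * π / ω₁) ^ 2 / 2)) := by
    intro i hi
    obtain ⟨hi₁, hil⟩ := Finset.mem_Icc.mp hi
    have hdouble := norm_integral_smul_integral_le hts_te
      (fun θ _ => hyp.hubdd i hil (ω₁ * θ)) (hft_bound i hil)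
    rw [one_mul] at hdouble
    rw [norm_smul, Real.norm_of_nonneg (by positivity)]
    gcongr ?_ * ?_
    · exact rpow_le_rpow_of_exponent_le hω₁ (hp'ub i hi₁ hil)
    · refine hdouble.trans ?_
      gcongr
  calc ‖QV1 l ft u p ω₁ x ts te‖
      ≤ ∑ _i ∈ Finset.Icc 1 l, ω₁ ^ p' * (L * (Λ₁ * ‖x₀‖) * ((2 * π / ω₁) ^ 2 / 2)) :=
        (norm_sum_le _ _).trans (Finset.sum_le_sum hterm)
    _ = π * l * L * Λ₁ * ‖x₀‖ * ω₁ ^ (p' - 1) * (2 * π / ω₁) := by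
        rw [Finset.sum_const, Nat.card_Icc, nsmul_eq_mul, rpow_sub hω₀, rpow_one]
        push_cast
        field_simp

/-- **Bound on `Q_{V1}`** (Lemma 7). -/
theorem bound_QV1
    {n : ℕ} (l : ℕ)
    (f : ℕ → ℝ → E n → E n)
    (Df : ℕ → ℝ → E n → (E n →L[ℝ] E n))
    (ft : ℕ → ℝ → E n → E n)
    (Lft : ℕ → ℕ → ℝ → E n → E n)
    (DLf : ℕ → ℕ → ℝ → E n → (E n →L[ℝ] E n))
    (u : ℕ → ℝ → ℝ) (p : ℕ → ℝ) (L : ℝ)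
    (hyp : Hyps l f Df ft Lft DLf u p L)
    -- setup: a bounded solution of (S) with frequency `ω₁ ≥ 1` on `[t₀, t₁]`
    (t₀ t₁ ω₁ Λ₁ : ℝ) (x₀ : E n) (x : ℝ → E n)
    (h01 : t₀ < t₁) (hω₁ : 1 ≤ ω₁) (hΛ₁ : 1 ≤ Λ₁)
    (hx0 : x t₀ = x₀)
    (hsol : IsSSol l f u p ω₁ x (Set.Icc t₀ t₁) t₀)
    (hxb : ∀ t ∈ Set.Icc t₀ t₁, ‖x t‖ ≤ Λ₁ * ‖x₀‖)
    -- `p′ = max_{1 ≤ i ≤ l} p i`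
    (p' : ℝ)
    (hp'ub : ∀ i, 1 ≤ i → i ≤ l → p i ≤ p')
    (hp'mem : ∃ i, 1 ≤ i ∧ i ≤ l ∧ p i = p')
    -- `t_s ∈ [t₀, t_r]` and `t_e ∈ [t_s, min (t_s + T₁) t₁]`, where `T₁ = 2π/ω₁`
    (ts te : ℝ)
    (hts : ts ∈ Set.Icc t₀ (t₀ + (⌊(t₁ - t₀) / (2 * π / ω₁)⌋₊ : ℝ) * (2 * π / ω₁)))
    (hte : te ∈ Set.Icc ts (min (ts + 2 * π / ω₁) t₁)) :
    ‖QV1 l ft u p ω₁ x ts te‖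
      ≤ π * l * L * Λ₁ * ‖x₀‖ * ω₁ ^ (p' - 1) * (2 * π / ω₁) :=
  bound_QV1_general l f Df ft Lft DLf u p L hyp t₀ t₁ ω₁ Λ₁ x₀ x hω₁ hxb p' hp'ub ts te hts hte
end

section
/- Bound on Q_{V2}: Under the setup assumptions, define Q_{V2}(t_s, t_e) := ∑_{1≤i<l, 0≤j≤l} ω₁^{p_i+p_j} ∫_{t_s}^{t_e} u_i(ω₁θ) ∫_{t_s}^{θ} u_j(ω₁τ) ∫_{t_s}^{τ} ∂_t L_{f_j}f_i(σ, x(σ)) dσ dτ dθ. Then ‖Q_{V2}(t_s, t_e)‖ ≤ (2/3) π² l² L Λ₁ ‖x₀‖ ω₁^{p′−1} T₁. -/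
open MeasureTheory Real Filter

/-! Each summand of `Q_{V2}` is an iterated integral of `∂_t L_{f_j} f_i` along the solution over
an interval of length at most `T₁`. The integrand is bounded by `L Λ₁ ‖x₀‖`, and each of the two
dither factors has modulus at most one, so the triple integral is at most
`L Λ₁ ‖x₀‖ T₁³ / 6`. Since `p_i + p_j ≤ p′ + 1`, the prefactor `ω₁^{p_i+p_j}` is at most
`ω₁^{p′+1}`, and `ω₁² T₁² = 4π²` turns `ω₁^{p′+1} T₁³ / 6` into `(2/3) π² ω₁^{p′-1} T₁`.
There are `(l - 1)(l + 1) ≤ l²` summands. -/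

section IteratedIntegral

variable {F : Type*} [NormedAddCommGroup F] [NormedSpace ℝ F] {a b C : ℝ}

theorem norm_intervalIntegral_le_of_norm_le_mul_pow {G : ℝ → F} (k : ℕ) (hab : a ≤ b)
    (hG : ∀ τ ∈ Set.Ioc a b, ‖G τ‖ ≤ C * (τ - a) ^ k) :
    ‖∫ τ in a..b, G τ‖ ≤ C * (b - a) ^ (k + 1) / (k + 1) := by
  calc ‖∫ τ in a..b, G τ‖ ≤ ∫ τ in a..b, C * (τ - a) ^ k :=
        intervalIntegral.norm_integral_le_of_norm_le hab (ae_of_all _ hG)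
          ((by fun_prop : Continuous fun τ => C * (τ - a) ^ k).intervalIntegrable _ _)
    _ = C * (b - a) ^ (k + 1) / (k + 1) := by
        rw [intervalIntegral.integral_const_mul,
          intervalIntegral.integral_comp_sub_right (fun y => y ^ k), integral_pow]
        simp only [sub_self, ne_eq, Nat.add_eq_zero_iff, one_ne_zero, and_false,
          not_false_eq_true, zero_pow, sub_zero]
        ring

theorem norm_intervalIntegral_smul_le_of_norm_le_mul_pow {G : ℝ → F} {v : ℝ → ℝ}
    (hv : ∀ τ, |v τ| ≤ 1) (k : ℕ) (hab : a ≤ b)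
    (hG : ∀ τ ∈ Set.Ioc a b, ‖G τ‖ ≤ C * (τ - a) ^ k) :
    ‖∫ τ in a..b, v τ • G τ‖ ≤ C * (b - a) ^ (k + 1) / (k + 1) :=
  norm_intervalIntegral_le_of_norm_le_mul_pow k hab fun τ hτ => by
    rw [norm_smul, Real.norm_eq_abs]
    exact (mul_le_of_le_one_left (norm_nonneg _) (hv τ)).trans (hG τ hτ)

theorem norm_iteratedIntegral_three_le {G : ℝ → F} {v w : ℝ → ℝ}
    (hv : ∀ θ, |v θ| ≤ 1) (hw : ∀ τ, |w τ| ≤ 1) (hab : a ≤ b)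
    (hG : ∀ σ ∈ Set.Ioc a b, ‖G σ‖ ≤ C) :
    ‖∫ θ in a..b, v θ • ∫ τ in a..θ, w τ • ∫ σ in a..τ, G σ‖ ≤ C * (b - a) ^ 3 / 6 := by
  have hG' : ∀ τ ∈ Set.Ioc a b, ‖∫ σ in a..τ, G σ‖ ≤ C * (τ - a) ^ 1 := fun τ hτ => by
    simpa using norm_intervalIntegral_le_of_norm_le_mul_pow 0 hτ.1.le fun σ hσ => by
      simpa using hG σ ⟨hσ.1, hσ.2.trans hτ.2⟩
  have hG'' : ∀ θ ∈ Set.Ioc a b,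
      ‖∫ τ in a..θ, w τ • ∫ σ in a..τ, G σ‖ ≤ C / 2 * (θ - a) ^ 2 := fun θ hθ => by
    have := norm_intervalIntegral_smul_le_of_norm_le_mul_pow hw 1 hθ.1.le fun τ hτ =>
      hG' τ ⟨hτ.1, hτ.2.trans hθ.2⟩
    norm_num at this
    linarith
  have := norm_intervalIntegral_smul_le_of_norm_le_mul_pow hv 2 hab hG''
  norm_num at this
  linarith

end IteratedIntegral

theorem RegVF.norm_le {n : ℕ} {L : ℝ} {g : ℝ → E n → E n} (hg : RegVF L g) (t : ℝ)
    (x : E n) : ‖g t x‖ ≤ L * ‖x‖ := by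
  simpa [hg.2.2 t] using hg.2.1 t x 0

theorem rpow_mul_cube_div_six_le {ω q p' s C : ℝ} (hω : 1 ≤ ω) (hq : q ≤ p' + 1)
    (hs₀ : 0 ≤ s) (hs : s ≤ 2 * π / ω) (hC : 0 ≤ C) :
    ω ^ q * (C * s ^ 3 / 6) ≤ 2 / 3 * π ^ 2 * C * ω ^ (p' - 1) * (2 * π / ω) := by
  have hω₀ : 0 < ω := zero_lt_one.trans_le hω
  have hsplit : ω ^ (p' + 1) = ω ^ (p' - 1) * ω ^ 2 := by
    rw [← Real.rpow_natCast, ← Real.rpow_add hω₀]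
    congr 1
    ring
  calc ω ^ q * (C * s ^ 3 / 6) ≤ ω ^ (p' + 1) * (C * (2 * π / ω) ^ 3 / 6) := by
        gcongr
    _ = 2 / 3 * π ^ 2 * C * ω ^ (p' - 1) * (2 * π / ω) := by
        rw [hsplit]
        field_simp
        ring

theorem norm_QV2_summand_le {n l : ℕ} {f : ℕ → ℝ → E n → E n}
    {Df : ℕ → ℝ → E n → (E n →L[ℝ] E n)} {ft : ℕ → ℝ → E n → E n}
    {Lft : ℕ → ℕ → ℝ → E n → E n} {DLf : ℕ → ℕ → ℝ → E n → (E n →L[ℝ] E n)}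
    {u : ℕ → ℝ → ℝ} {p : ℕ → ℝ} {L ω₁ p' C ts te : ℝ} {x : ℝ → E n}
    (hyp : Hyps l f Df ft Lft DLf u p L) (hω₁ : 1 ≤ ω₁)
    (hp'ub : ∀ i, 1 ≤ i → i ≤ l → p i ≤ p')
    (hste : ts ≤ te) (hT : te - ts ≤ 2 * π / ω₁) (hC : 0 ≤ C)
    {i j : ℕ} (hi : i ∈ Finset.Ico 1 l) (hj : j ∈ Finset.Icc 0 l)
    (hLft : ∀ σ ∈ Set.Ioc ts te, ‖Lft j i σ (x σ)‖ ≤ C) :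
    ‖ω₁ ^ (p i + p j) •
        ∫ θ in ts..te, u i (ω₁ * θ) •
          ∫ τ in ts..θ, u j (ω₁ * τ) • ∫ σ in ts..τ, Lft j i σ (x σ)‖
      ≤ 2 / 3 * π ^ 2 * C * ω₁ ^ (p' - 1) * (2 * π / ω₁) := by
  obtain ⟨hi₁, hil⟩ := Finset.mem_Ico.1 hi
  have hjl := (Finset.mem_Icc.1 hj).2
  have hpj : p j ≤ 1 := by
    rcases Nat.eq_zero_or_pos j with rfl | hj₁
    · simp [hyp.hp0]
    · exact (hyp.hp j hj₁ hjl).2.le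
  have hexp : p i + p j ≤ p' + 1 := add_le_add (hp'ub i hi₁ hil.le) hpj
  rw [norm_smul, Real.norm_of_nonneg (by positivity)]
  calc _ ≤ ω₁ ^ (p i + p j) * (C * (te - ts) ^ 3 / 6) := by
        gcongr
        exact norm_iteratedIntegral_three_le (fun θ => hyp.hubdd i hil.le _)
          (fun τ => hyp.hubdd j hjl _) hste hLft
    _ ≤ _ := rpow_mul_cube_div_six_le hω₁ hexp (sub_nonneg.2 hste) hT hC

theorem norm_QV2_le_of_summand_le {n l : ℕ} {Lft : ℕ → ℕ → ℝ → E n → E n}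
    {u : ℕ → ℝ → ℝ} {p : ℕ → ℝ} {ω₁ B ts te : ℝ} {x : ℝ → E n} (hB : 0 ≤ B)
    (h : ∀ i ∈ Finset.Ico 1 l, ∀ j ∈ Finset.Icc 0 l,
      ‖ω₁ ^ (p i + p j) •
        ∫ θ in ts..te, u i (ω₁ * θ) •
          ∫ τ in ts..θ, u j (ω₁ * τ) • ∫ σ in ts..τ, Lft j i σ (x σ)‖ ≤ B) :
    ‖QV2 l Lft u p ω₁ x ts te‖ ≤ l ^ 2 * B := by
  have hcard : ((l - 1 : ℕ) : ℝ) * (l + 1 : ℕ) ≤ l ^ 2 := by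
    rcases Nat.eq_zero_or_pos l with rfl | hl
    · simp
    · push_cast [Nat.cast_sub hl]
      nlinarith
  calc ‖QV2 l Lft u p ω₁ x ts te‖ ≤ ∑ i ∈ Finset.Ico 1 l, ∑ j ∈ Finset.Icc 0 l, B :=
        norm_sum_le_of_le _ fun i hi => norm_sum_le_of_le _ fun j hj => h i hi j hj
    _ = ((l - 1 : ℕ) : ℝ) * (l + 1 : ℕ) * B := by
        simp only [Finset.sum_const, Nat.card_Ico, Nat.card_Icc, Nat.sub_zero, nsmul_eq_mul]
        ring
    _ ≤ l ^ 2 * B := by gcongr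

theorem bound_QV2_general
    {n : ℕ} (l : ℕ)
    (f : ℕ → ℝ → E n → E n)
    (Df : ℕ → ℝ → E n → (E n →L[ℝ] E n))
    (ft : ℕ → ℝ → E n → E n)
    (Lft : ℕ → ℕ → ℝ → E n → E n)
    (DLf : ℕ → ℕ → ℝ → E n → (E n →L[ℝ] E n))
    (u : ℕ → ℝ → ℝ) (p : ℕ → ℝ) (L : ℝ)
    (hyp : Hyps l f Df ft Lft DLf u p L)
    -- setup: a bounded solution of (S) with frequency `ω₁ ≥ 1` on `[t₀, t₁]`
    (t₀ t₁ ω₁ Λ₁ : ℝ) (x₀ : E n) (x : ℝ → E n)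
    (hω₁ : 1 ≤ ω₁)
    (hxb : ∀ t ∈ Set.Icc t₀ t₁, ‖x t‖ ≤ Λ₁ * ‖x₀‖)
    -- `p′ = max_{1 ≤ i ≤ l} p i`
    (p' : ℝ)
    (hp'ub : ∀ i, 1 ≤ i → i ≤ l → p i ≤ p')
    -- `t_s ∈ [t₀, t_r]` and `t_e ∈ [t_s, min (t_s + T₁) t₁]`, where `T₁ = 2π/ω₁`
    (ts te : ℝ)
    (hts : ts ∈ Set.Icc t₀ (t₀ + (⌊(t₁ - t₀) / (2 * π / ω₁)⌋₊ : ℝ) * (2 * π / ω₁)))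
    (hte : te ∈ Set.Icc ts (min (ts + 2 * π / ω₁) t₁)) :
    ‖QV2 l Lft u p ω₁ x ts te‖
      ≤ (2/3) * π ^ 2 * l ^ 2 * L * Λ₁ * ‖x₀‖ * ω₁ ^ (p' - 1) * (2 * π / ω₁) := by
  obtain ⟨hste, hte_le⟩ := hte
  have hte₁ : te ≤ t₁ := hte_le.trans (min_le_right _ _)
  have hT : te - ts ≤ 2 * π / ω₁ := by linarith [hte_le.trans (min_le_left _ _)]
  have hx₀ : 0 ≤ Λ₁ * ‖x₀‖ := (norm_nonneg _).trans (hxb ts ⟨hts.1, hste.trans hte₁⟩)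
  have hLft : ∀ i j, i ≤ l → j ≤ l → ∀ σ ∈ Set.Ioc ts te,
      ‖Lft j i σ (x σ)‖ ≤ L * (Λ₁ * ‖x₀‖) := fun i j hi hj σ hσ =>
    ((hyp.hreg_Lft i j hi hj).norm_le σ (x σ)).trans <|
      mul_le_mul_of_nonneg_left (hxb σ ⟨hts.1.trans hσ.1.le, hσ.2.trans hte₁⟩) hyp.hLpos.le
  have hC : 0 ≤ L * (Λ₁ * ‖x₀‖) := mul_nonneg hyp.hLpos.le hx₀
  calc ‖QV2 l Lft u p ω₁ x ts te‖
      ≤ l ^ 2 * (2 / 3 * π ^ 2 * (L * (Λ₁ * ‖x₀‖)) * ω₁ ^ (p' - 1) * (2 * π / ω₁)) := by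
        refine norm_QV2_le_of_summand_le (by positivity) fun i hi j hj =>
          norm_QV2_summand_le hyp hω₁ hp'ub hste hT hC hi hj ?_
        exact hLft i j (Finset.mem_Ico.1 hi).2.le (Finset.mem_Icc.1 hj).2
    _ = _ := by ring

/-- **Bound on `Q_{V2}`** (Lemma 8). -/
theorem bound_QV2
    {n : ℕ} (l : ℕ)
    (f : ℕ → ℝ → E n → E n)
    (Df : ℕ → ℝ → E n → (E n →L[ℝ] E n))
    (ft : ℕ → ℝ → E n → E n)
    (Lft : ℕ → ℕ → ℝ → E n → E n)
    (DLf : ℕ → ℕ → ℝ → E n → (E n →L[ℝ] E n))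
    (u : ℕ → ℝ → ℝ) (p : ℕ → ℝ) (L : ℝ)
    (hyp : Hyps l f Df ft Lft DLf u p L)
    -- setup: a bounded solution of (S) with frequency `ω₁ ≥ 1` on `[t₀, t₁]`
    (t₀ t₁ ω₁ Λ₁ : ℝ) (x₀ : E n) (x : ℝ → E n)
    (h01 : t₀ < t₁) (hω₁ : 1 ≤ ω₁) (hΛ₁ : 1 ≤ Λ₁)
    (hx0 : x t₀ = x₀)
    (hsol : IsSSol l f u p ω₁ x (Set.Icc t₀ t₁) t₀)
    (hxb : ∀ t ∈ Set.Icc t₀ t₁, ‖x t‖ ≤ Λ₁ * ‖x₀‖)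
    -- `p′ = max_{1 ≤ i ≤ l} p i`
    (p' : ℝ)
    (hp'ub : ∀ i, 1 ≤ i → i ≤ l → p i ≤ p')
    (hp'mem : ∃ i, 1 ≤ i ∧ i ≤ l ∧ p i = p')
    -- `t_s ∈ [t₀, t_r]` and `t_e ∈ [t_s, min (t_s + T₁) t₁]`, where `T₁ = 2π/ω₁`
    (ts te : ℝ)
    (hts : ts ∈ Set.Icc t₀ (t₀ + (⌊(t₁ - t₀) / (2 * π / ω₁)⌋₊ : ℝ) * (2 * π / ω₁)))
    (hte : te ∈ Set.Icc ts (min (ts + 2 * π / ω₁) t₁)) :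
    ‖QV2 l Lft u p ω₁ x ts te‖
      ≤ (2/3) * π ^ 2 * l ^ 2 * L * Λ₁ * ‖x₀‖ * ω₁ ^ (p' - 1) * (2 * π / ω₁) :=
  bound_QV2_general l f Df ft Lft DLf u p L hyp t₀ t₁ ω₁ Λ₁ x₀ x hω₁ hxb p' hp'ub ts te hts hte
end
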